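/- arXiv:2601.19601 — 3 statements merged into one kernel-verified Lean document; each statement's English description precedes it below -/
import Mathlib

section
/- Let S be a nonnegative random variable with differentiable cdf F and density f = F', let ω ∈ (0,1), and let P be twice differentiable with P''(Δ) > 0. Then at any point (t,Δ) with f(t) ≥ 0 and f(t+Δ) ≥ 0, the Hessian matrix of H(t,Δ) = ω·E[(S−t−Δ)⁺] + (1−ω)·E[(t−S)⁺] + P(Δ), which equals [[(1−ω)f(t)+ωf(t+Δ), ωf(t+Δ)],[ωf(t+Δ), ωf(t+Δ)+P''(Δ)]], is positive semidefinite; it is positive definite when f(t) > 0 and f(t+Δ) > 0. -/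
open MeasureTheory

/-- The Hessian of the window-design objective is positive semidefinite, and positive
definite when the density is positive at the window boundaries. -/
theorem stmt1 {Ωs : Type*} [MeasurableSpace Ωs] (ℙ : Measure Ωs)
    [IsProbabilityMeasure ℙ]
    (S : Ωs → ℝ) (hSnn : ∀ a, 0 ≤ S a)
    (F f : ℝ → ℝ) (hF : F = fun t => (ℙ {a | S a ≤ t}).toReal)
    (hFdiff : Differentiable ℝ F) (hf : f = deriv F)
    (ω : ℝ) (hω : ω ∈ Set.Ioo (0:ℝ) 1)
    (P : ℝ → ℝ) (hP1 : Differentiable ℝ P) (hP2 : Differentiable ℝ (deriv P))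
    (t Δ : ℝ) (hft : 0 ≤ f t) (hftΔ : 0 ≤ f (t + Δ))
    (hP'' : 0 < deriv (deriv P) Δ) :
    Matrix.PosSemidef
      !![(1 - ω) * f t + ω * f (t + Δ), ω * f (t + Δ);
         ω * f (t + Δ), ω * f (t + Δ) + deriv (deriv P) Δ] ∧
    (0 < f t → 0 < f (t + Δ) →
      Matrix.PosDef
        !![(1 - ω) * f t + ω * f (t + Δ), ω * f (t + Δ);
           ω * f (t + Δ), ω * f (t + Δ) + deriv (deriv P) Δ]) := by

  obtain ⟨hω0, hω1⟩ := hω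
  have hherm : (!![(1 - ω) * f t + ω * f (t + Δ), ω * f (t + Δ);
         ω * f (t + Δ), ω * f (t + Δ) + deriv (deriv P) Δ]).IsHermitian := by
    ext i j
    fin_cases i <;> fin_cases j <;> rfl
  constructor
  · refine Matrix.posSemidef_iff_dotProduct_mulVec.mpr ⟨hherm, fun x => ?_⟩
    have key : dotProduct (star x) (!![(1 - ω) * f t + ω * f (t + Δ), ω * f (t + Δ);
         ω * f (t + Δ), ω * f (t + Δ) + deriv (deriv P) Δ].mulVec x)
        = (1 - ω) * f t * (x 0)^2 + ω * f (t + Δ) * (x 0 + x 1)^2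
          + deriv (deriv P) Δ * (x 1)^2 := by
      simp [Matrix.mulVec, dotProduct, Fin.sum_univ_two]
      ring
    rw [key]
    have h1 : (0:ℝ) ≤ 1 - ω := by linarith
    positivity
  · intro hft' hftΔ'
    refine Matrix.posDef_iff_dotProduct_mulVec.mpr ⟨hherm, fun x hx => ?_⟩
    have key : dotProduct (star x) (!![(1 - ω) * f t + ω * f (t + Δ), ω * f (t + Δ);
         ω * f (t + Δ), ω * f (t + Δ) + deriv (deriv P) Δ].mulVec x)
        = (1 - ω) * f t * (x 0)^2 + ω * f (t + Δ) * (x 0 + x 1)^2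
          + deriv (deriv P) Δ * (x 1)^2 := by
      simp [Matrix.mulVec, dotProduct, Fin.sum_univ_two]
      ring
    rw [key]
    have h1 : (0:ℝ) < 1 - ω := by linarith
    rcases eq_or_ne (x 1) 0 with h | h
    · have hx0 : x 0 ≠ 0 := by
        intro h0
        apply hx
        ext i; fin_cases i <;> assumption
      nlinarith [pow_pos (abs_pos.mpr hx0) 2, sq_abs (x 0), sq_nonneg (x 0 + x 1), sq_nonneg (x 1), mul_pos hω0 hftΔ', mul_pos h1 hft']
    · nlinarith [pow_pos (abs_pos.mpr h) 2, sq_abs (x 1), sq_nonneg (x 0 + x 1), sq_nonneg (x 0), mul_pos hω0 hftΔ', mul_pos h1 hft']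
end

section
/- Let S have a probability density symmetric about μ̃ ∈ ℝ₊, i.e., its cdf F satisfies F(μ̃ − x) = 1 − F(μ̃ + x) for all x. Let P be strictly convex with P' having a continuous inverse. If [t(ω'), t(ω') + Δ] is the optimal window for weight ω = ω' (i.e., (t(ω'), Δ) solves the first-order conditions for ω'), then the optimal window for ω = 1 − ω' is [t(1−ω'), t(1−ω') + Δ] with the same width Δ, where t(1−ω') satisfies t(ω') − μ̃ + Δ = −(t(1−ω') − μ̃). -/
/-! Reflecting the window through `μ` swaps the two tail masses `F t` and `1 - F (t + Δ)`,
which is exactly the effect of exchanging `ω'` and `1 - ω'` in the first-order conditions. -/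

theorem apply_two_mul_sub_of_symm {F : ℝ → ℝ} {μ : ℝ}
    (hsym : ∀ x, F (μ - x) = 1 - F (μ + x)) (x : ℝ) : F (2 * μ - x) = 1 - F x := by
  have h := hsym (x - μ)
  rwa [show μ - (x - μ) = 2 * μ - x by ring, add_sub_cancel] at h

theorem stmt5_general
    (F : ℝ → ℝ) (μ : ℝ)
    (hsym : ∀ x, F (μ - x) = 1 - F (μ + x))
    (g : ℝ → ℝ)
    (ω' : ℝ)
    (t Δ : ℝ)
    (h1 : (1 - ω') * F t = ω' * (1 - F (t + Δ)))
    (h2 : ω' * (1 - F (t + Δ)) = g Δ) :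
    ∀ t' : ℝ, t - μ + Δ = -(t' - μ) →
      (1 - (1 - ω')) * F t' = (1 - ω') * (1 - F (t' + Δ)) ∧
      (1 - ω') * (1 - F (t' + Δ)) = g Δ := by
  intro t' ht'
  have hleft : F t' = 1 - F (t + Δ) := by
    rw [show t' = 2 * μ - (t + Δ) by linarith, apply_two_mul_sub_of_symm hsym]
  have hright : F (t' + Δ) = 1 - F t := by
    rw [show t' + Δ = 2 * μ - t by linarith, apply_two_mul_sub_of_symm hsym]
  rw [hleft, hright, sub_sub_cancel, sub_sub_cancel, ← h2]
  exact ⟨h1.symm, h1⟩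

/-- Symmetry lemma: if the density of S is symmetric about μ̃ and [t(ω'), t(ω') + Δ]
is the optimal window for weight ω', then the optimal window for weight 1 - ω' is
[t(1-ω'), t(1-ω') + Δ] with the same width, where t(ω') - μ̃ + Δ = -(t(1-ω') - μ̃). -/
theorem stmt5
    (F : ℝ → ℝ) (μ : ℝ) (hμ : 0 ≤ μ)
    (hsym : ∀ x, F (μ - x) = 1 - F (μ + x))
    (P g ginv : ℝ → ℝ)
    (hP : StrictConvexOn ℝ (Set.Ici 0) P)
    (hg : ∀ x, HasDerivAt P (g x) x)
    (hginv_cont : Continuous ginv)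
    (hgl : Function.LeftInverse ginv g)
    (ω' : ℝ) (hω : ω' ∈ Set.Ioo (0:ℝ) 1)
    (t Δ : ℝ)
    (h1 : (1 - ω') * F t = ω' * (1 - F (t + Δ)))
    (h2 : ω' * (1 - F (t + Δ)) = g Δ) :
    ∀ t' : ℝ, t - μ + Δ = -(t' - μ) →
      (1 - (1 - ω')) * F t' = (1 - ω') * (1 - F (t' + Δ)) ∧
      (1 - ω') * (1 - F (t' + Δ)) = g Δ :=
  stmt5_general F μ hsym g ω' t Δ h1 h2
end

section
/- Let B₁,...,Bₙ be independent with Bᵢ ~ N(μ, σ²), and let Sᵢ = B₁ + ... + Bᵢ. For linear penalty P(Δ) = αΔ with 0 < α < min{ω, 1−ω}, the optimal window for client i is (iμ + σ√i·Φ⁻¹(α/(1−ω)), iμ + σ√i·Φ⁻¹(1−α/ω)); in particular the window width is proportional to √i. -/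
open MeasureTheory ProbabilityTheory

/-- Standard normal density. -/
noncomputable def stdphi (z : ℝ) : ℝ := Real.exp (-z ^ 2 / 2) / Real.sqrt (2 * Real.pi)

/-- Standard normal cumulative distribution function. -/
noncomputable def stdPhi (z : ℝ) : ℝ := ∫ x in Set.Iic z, stdphi x

/-- Standard normal quantile function. -/
noncomputable def stdPhiInv : ℝ → ℝ := Function.invFun stdPhi


open Real NNReal ENNReal Set Filter

section Aux

lemma pdf_conv_exp (m₁ m₂ a b z x : ℝ) (ha : 0 < a) (hb : 0 < b) :
    (-(x-m₁)^2/(2*a)) + (-(z-x-m₂)^2/(2*b))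
    = (-(z-m₁-m₂)^2/(2*(a+b))) + (-(x-(m₁+a*(z-m₁-m₂)/(a+b)))^2/(2*(a*b/(a+b)))) := by
  have h1 : a ≠ 0 := ha.ne'
  have h2 : b ≠ 0 := hb.ne'
  have h3 : a + b ≠ 0 := by positivity
  field_simp
  ring

lemma pdf_conv_coef (a b : ℝ) (ha : 0 < a) (hb : 0 < b) :
    (√(2*π*a))⁻¹ * (√(2*π*b))⁻¹
    = (√(2*π*(a+b)))⁻¹ * (√(2*π*(a*b/(a+b))))⁻¹ := by
  rw [← mul_inv, ← mul_inv, ← Real.sqrt_mul (by positivity), ← Real.sqrt_mul (by positivity)]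
  congr 2
  have h3 : a + b ≠ 0 := by positivity
  field_simp

lemma gaussianPDFReal_conv (m₁ m₂ : ℝ) (v₁ v₂ : ℝ≥0) (h₁ : v₁ ≠ 0) (h₂ : v₂ ≠ 0) (z x : ℝ) :
    gaussianPDFReal m₁ v₁ x * gaussianPDFReal m₂ v₂ (z - x)
    = gaussianPDFReal (m₁ + m₂) (v₁ + v₂) z *
      gaussianPDFReal (m₁ + v₁ * (z - m₁ - m₂) / (v₁ + v₂)) (v₁ * v₂ / (v₁ + v₂)) x := by
  have ha : 0 < (v₁ : ℝ) := by
    simpa [pos_iff_ne_zero] using h₁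
  have hb : 0 < (v₂ : ℝ) := by
    simpa [pos_iff_ne_zero] using h₂
  have hab : v₁ + v₂ ≠ 0 := by
    intro h; exact h₁ (by simpa using (add_eq_zero.mp h).1)
  simp only [gaussianPDFReal, NNReal.coe_add, NNReal.coe_div, NNReal.coe_mul]
  rw [mul_mul_mul_comm, ← Real.exp_add, mul_mul_mul_comm ((√(2*π*((v₁:ℝ)+v₂)))⁻¹),
    ← Real.exp_add, pdf_conv_coef _ _ ha hb, pdf_conv_exp m₁ m₂ _ _ z x ha hb]
  ring_nf

lemma gaussianPDF_lconv (m₁ m₂ : ℝ) (v₁ v₂ : ℝ≥0) (h₁ : v₁ ≠ 0) (h₂ : v₂ ≠ 0) (z : ℝ) :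
    ∫⁻ x, gaussianPDF m₁ v₁ x * gaussianPDF m₂ v₂ (z - x)
    = gaussianPDF (m₁ + m₂) (v₁ + v₂) z := by
  have hw : v₁ * v₂ / (v₁ + v₂) ≠ 0 := by
    apply div_ne_zero (mul_ne_zero h₁ h₂)
    intro h; exact h₁ (by simpa using (add_eq_zero.mp h).1)
  simp only [gaussianPDF]
  calc ∫⁻ x, ENNReal.ofReal (gaussianPDFReal m₁ v₁ x) *
        ENNReal.ofReal (gaussianPDFReal m₂ v₂ (z - x))
      = ∫⁻ x, ENNReal.ofReal (gaussianPDFReal (m₁ + m₂) (v₁ + v₂) z) *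
          ENNReal.ofReal
            (gaussianPDFReal (m₁ + v₁ * (z - m₁ - m₂) / (v₁ + v₂)) (v₁ * v₂ / (v₁ + v₂)) x) := by
        congr 1 with x
        rw [← ENNReal.ofReal_mul (gaussianPDFReal_nonneg _ _ _),
          gaussianPDFReal_conv m₁ m₂ v₁ v₂ h₁ h₂ z x,
          ENNReal.ofReal_mul (gaussianPDFReal_nonneg _ _ _)]
    _ = ENNReal.ofReal (gaussianPDFReal (m₁ + m₂) (v₁ + v₂) z) := by
        show (∫⁻ x, ENNReal.ofReal (gaussianPDFReal (m₁ + m₂) (v₁ + v₂) z) *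
            gaussianPDF (m₁ + v₁ * (z - m₁ - m₂) / (v₁ + v₂)) (v₁ * v₂ / (v₁ + v₂)) x) = _
        rw [lintegral_const_mul _ (measurable_gaussianPDF (m₁ + v₁ * (z - m₁ - m₂) / (v₁ + v₂)) (v₁ * v₂ / (v₁ + v₂))),
          lintegral_gaussianPDF_eq_one _ hw, mul_one]

lemma gaussianReal_conv (m₁ m₂ : ℝ) (v₁ v₂ : ℝ≥0) (h₁ : v₁ ≠ 0) (h₂ : v₂ ≠ 0) :
    Measure.conv (gaussianReal m₁ v₁) (gaussianReal m₂ v₂) = gaussianReal (m₁ + m₂) (v₁ + v₂) := by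
  have h12 : v₁ + v₂ ≠ 0 := by
    intro h; exact h₁ (by simpa using (add_eq_zero.mp h).1)
  rw [gaussianReal_of_var_ne_zero _ h₁, gaussianReal_of_var_ne_zero _ h₂,
    gaussianReal_of_var_ne_zero _ h12]
  set f := gaussianPDF m₁ v₁
  set g := gaussianPDF m₂ v₂
  have hf := measurable_gaussianPDF m₁ v₁
  have hg := measurable_gaussianPDF m₂ v₂
  ext s hs
  rw [Measure.conv, Measure.map_apply measurable_add hs,
    Measure.prod_apply (measurable_add hs), withDensity_apply' _ s]
  have inner_eq : ∀ x : ℝ, (volume.withDensity g) (Prod.mk x ⁻¹' ((fun p : ℝ × ℝ => p.1 + p.2) ⁻¹' s))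
      = ∫⁻ z, s.indicator 1 z * g (z - x) := by
    intro x
    have hpre : MeasurableSet (Prod.mk x ⁻¹' ((fun p : ℝ × ℝ => p.1 + p.2) ⁻¹' s)) :=
      measurable_prodMk_left (measurable_add hs)
    rw [withDensity_apply _ hpre, ← lintegral_indicator hpre g]
    have : ∀ y : ℝ, (Prod.mk x ⁻¹' ((fun p : ℝ × ℝ => p.1 + p.2) ⁻¹' s)).indicator g y
        = (fun z => s.indicator 1 z * g (z - x)) (x + y) := by
      intro y
      simp only [indicator, mem_preimage, add_sub_cancel_left]
      by_cases h : x + y ∈ s <;> simp [h]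
    simp_rw [this]
    exact lintegral_add_left_eq_self (fun z => s.indicator 1 z * g (z - x)) x
  have hFm : Measurable (Function.uncurry fun (x z : ℝ) => s.indicator 1 z * g (z - x)) := by
    have h : Function.uncurry (fun (x z : ℝ) => s.indicator 1 z * g (z - x))
        = fun p : ℝ × ℝ => s.indicator 1 p.2 * g (p.2 - p.1) := rfl
    rw [h]
    exact ((measurable_const.indicator hs).comp measurable_snd).mul
      (hg.comp (measurable_snd.sub measurable_fst))
  calc ∫⁻ x, (volume.withDensity g) (Prod.mk x ⁻¹' ((fun p : ℝ × ℝ => p.1 + p.2) ⁻¹' s))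
        ∂(volume.withDensity f)
      = ∫⁻ x, f x * ∫⁻ z, s.indicator 1 z * g (z - x) := by
        simp_rw [inner_eq]
        rw [lintegral_withDensity_eq_lintegral_mul _ hf hFm.lintegral_prod_right]
        rfl
    _ = ∫⁻ x, ∫⁻ z, f x * (s.indicator 1 z * g (z - x)) := by
        congr 1 with x
        rw [lintegral_const_mul]
        exact ((measurable_const.indicator hs).mul (hg.comp (measurable_id.sub_const x)))
    _ = ∫⁻ z, ∫⁻ x, f x * (s.indicator 1 z * g (z - x)) := by
        refine lintegral_lintegral_swap ?_
        exact ((hf.comp measurable_fst).mul hFm).aemeasurable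
    _ = ∫⁻ z, s.indicator 1 z * ∫⁻ x, f x * g (z - x) := by
        congr 1 with z
        simp_rw [mul_left_comm (f _)]
        rw [lintegral_const_mul]
        exact hf.mul (hg.comp (measurable_const.sub measurable_id))
    _ = ∫⁻ z in s, gaussianPDF (m₁ + m₂) (v₁ + v₂) z := by
        simp_rw [f, g, fun z => gaussianPDF_lconv m₁ m₂ v₁ v₂ h₁ h₂ z]
        rw [← lintegral_indicator hs (gaussianPDF (m₁ + m₂) (v₁ + v₂))]
        congr 1 with z
        simp only [indicator]
        by_cases h : z ∈ s <;> simp [h]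

lemma map_sum_gauss {Ωs : Type*} [MeasurableSpace Ωs] (Pr : Measure Ωs)
    [IsProbabilityMeasure Pr]
    (B : ℕ → Ωs → ℝ) (μ σ : ℝ) (hσ : 0 < σ)
    (hmeas : ∀ j, Measurable (B j))
    (hind : iIndepFun B Pr)
    (hB : ∀ j, Measure.map (B j) Pr = gaussianReal μ ⟨σ ^ 2, sq_nonneg σ⟩) :
    ∀ i : ℕ, 1 ≤ i →
      Measure.map (fun a => ∑ j ∈ Finset.range i, B j a) Pr
        = gaussianReal (i * μ) ((i : ℝ≥0) * ⟨σ ^ 2, sq_nonneg σ⟩) := by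
  have hv : (⟨σ ^ 2, sq_nonneg σ⟩ : ℝ≥0) ≠ 0 := by
    intro h
    have := congrArg (fun x : ℝ≥0 => (x : ℝ)) h
    change σ ^ 2 = (0:ℝ) at this
    simp at this
    exact hσ.ne' this
  intro i hi
  induction i, hi using Nat.le_induction with
  | base =>
    simp only [Finset.range_one, Finset.sum_singleton]
    rw [hB 0]
    norm_num
    exact congrArg _ (one_mul _).symm
  | succ i hi ih =>
    have hX : Measurable (fun a => ∑ j ∈ Finset.range i, B j a) := by
      exact Finset.measurable_sum _ (fun j _ => hmeas j)
    have hIF : IndepFun (fun a => ∑ j ∈ Finset.range i, B j a) (B i) Pr := by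
      have := hind.indepFun_finset_sum_of_notMem hmeas (Finset.notMem_range_self (n := i))
      convert this using 1
      ext a
      simp [Finset.sum_apply]
    have hpair : Measure.map (fun a => ((∑ j ∈ Finset.range i, B j a), B i a)) Pr
        = (Measure.map (fun a => ∑ j ∈ Finset.range i, B j a) Pr).prod
            (Measure.map (B i) Pr) :=
      (indepFun_iff_map_prod_eq_prod_map_map hX.aemeasurable (hmeas i).aemeasurable).mp hIF
    have hmap : Measure.map (fun a => ∑ j ∈ Finset.range (i + 1), B j a) Pr
        = Measure.conv (Measure.map (fun a => ∑ j ∈ Finset.range i, B j a) Pr)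
            (Measure.map (B i) Pr) := by
      rw [Measure.conv, ← hpair,
        Measure.map_map measurable_add (hX.prodMk (hmeas i))]
      simp only [Function.comp_def, Finset.sum_range_succ]
    have hiv : ((i : ℝ≥0) * ⟨σ ^ 2, sq_nonneg σ⟩ : ℝ≥0) ≠ 0 := by
      intro h
      rcases mul_eq_zero.mp h with h' | h'
      · exact Nat.cast_ne_zero.mpr (by omega : i ≠ 0) h'
      · exact hv h'
    rw [hmap, ih, hB i, gaussianReal_conv _ _ _ _ hiv hv]
    congr 1
    · push_cast; ring
    · push_cast; exact (fun a b => by ring : ∀ a b : ℝ≥0, a * b + b = (a + 1) * b) _ _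

lemma stdphi_eq : stdphi = gaussianPDFReal 0 1 := by
  ext x
  simp [stdphi, gaussianPDFReal, div_eq_inv_mul, mul_comm]

lemma integrable_stdphi : Integrable stdphi := by
  rw [stdphi_eq]; exact integrable_gaussianPDFReal 0 1

lemma stdPhi_nonneg (z : ℝ) : 0 ≤ stdPhi z := by
  apply integral_nonneg
  intro x
  rw [stdphi_eq]
  exact gaussianPDFReal_nonneg 0 1 x

lemma stdPhi_eq_add (b : ℝ) : stdPhi b = stdPhi 0 + ∫ x in (0:ℝ)..b, stdphi x := by
  have h := intervalIntegral.integral_Iic_sub_Iic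
    (integrable_stdphi.integrableOn (s := Iic 0)) (integrable_stdphi.integrableOn (s := Iic b))
  simp only [stdPhi]
  linarith [h]

lemma stdPhi_continuous : Continuous stdPhi := by
  have : Continuous fun b => ∫ x in (0:ℝ)..b, stdphi x :=
    intervalIntegral.continuous_primitive (fun a b => integrable_stdphi.intervalIntegrable) 0
  have h2 : Continuous fun b => stdPhi 0 + ∫ x in (0:ℝ)..b, stdphi x := continuous_const.add this
  convert h2 using 1
  ext b
  exact stdPhi_eq_add b

lemma stdPhi_tendsto_atBot : Tendsto stdPhi atBot (nhds 0) := by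
  have h := intervalIntegral_tendsto_integral_Iic (0:ℝ)
    (integrable_stdphi.integrableOn) tendsto_id
  have h2 : Tendsto (fun a => stdPhi 0 - ∫ x in a..(0:ℝ), stdphi x) atBot
      (nhds (stdPhi 0 - ∫ x in Iic (0:ℝ), stdphi x)) := tendsto_const_nhds.sub h
  have heq : ∀ a : ℝ, stdPhi 0 - ∫ x in a..(0:ℝ), stdphi x = stdPhi a := by
    intro a
    have h := intervalIntegral.integral_Iic_sub_Iic
      (integrable_stdphi.integrableOn (s := Iic a)) (integrable_stdphi.integrableOn (s := Iic 0))
    simp only [stdPhi]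
    linarith
  simp_rw [heq] at h2
  have : stdPhi 0 - ∫ x in Iic (0:ℝ), stdphi x = 0 := by simp [stdPhi]
  rwa [this] at h2

lemma stdphi_total : ∫ x, stdphi x = 1 := by
  rw [stdphi_eq]; exact integral_gaussianPDFReal_eq_one 0 one_ne_zero

lemma stdPhi_tendsto_atTop : Tendsto stdPhi atTop (nhds 1) := by
  have h := intervalIntegral_tendsto_integral_Ioi (0:ℝ)
    (integrable_stdphi.integrableOn) tendsto_id
  have h2 : Tendsto (fun b => stdPhi 0 + ∫ x in (0:ℝ)..b, stdphi x) atTop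
      (nhds (stdPhi 0 + ∫ x in Ioi (0:ℝ), stdphi x)) := tendsto_const_nhds.add h
  simp_rw [← stdPhi_eq_add] at h2
  have : stdPhi 0 + ∫ x in Ioi (0:ℝ), stdphi x = 1 := by
    have := integral_add_compl (measurableSet_Iic (a := (0:ℝ))) integrable_stdphi
    rw [compl_Iic] at this
    rw [← stdphi_total]
    simpa [stdPhi] using this
  rwa [this] at h2

lemma stdPhi_exists {p : ℝ} (hp : p ∈ Set.Ioo (0:ℝ) 1) : ∃ z, stdPhi z = p := by
  obtain ⟨a, ha⟩ := (stdPhi_tendsto_atBot.eventually_lt_const hp.1).exists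
  obtain ⟨b, hb⟩ := (stdPhi_tendsto_atTop.eventually_const_lt hp.2).exists
  have hm : p ∈ Set.Icc (stdPhi a) (stdPhi b) := ⟨ha.le, hb.le⟩
  exact intermediate_value_univ a b stdPhi_continuous hm

lemma stdPhi_invFun_eq {p : ℝ} (hp : p ∈ Set.Ioo (0:ℝ) 1) : stdPhi (stdPhiInv p) = p :=
  Function.invFun_eq (stdPhi_exists hp)

lemma gaussianReal_Iic (m : ℝ) (v : ℝ≥0) (hv : v ≠ 0) (z : ℝ) :
    gaussianReal m v (Iic (m + Real.sqrt v * z)) = ENNReal.ofReal (stdPhi z) := by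
  have hv' : (0:ℝ) < v := by
    rcases lt_or_eq_of_le v.coe_nonneg with h | h
    · exact h
    · exact absurd (NNReal.coe_injective (by simp [← h])) hv
  have hs : (0:ℝ) < Real.sqrt v := Real.sqrt_pos.mpr hv'
  have hrep : gaussianReal m v
      = Measure.map (· + m) (Measure.map (Real.sqrt v * ·) (gaussianReal 0 1)) := by
    rw [gaussianReal_map_const_mul, gaussianReal_map_add_const]
    congr 1
    · ring
    · ext
      simp [Real.sq_sqrt v.coe_nonneg]
  rw [hrep, Measure.map_apply (measurable_add_const m) measurableSet_Iic]
  have h1 : (· + m) ⁻¹' Iic (m + Real.sqrt v * z) = Iic (Real.sqrt v * z) := by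
    ext x; simp [add_comm]
  rw [h1, Measure.map_apply (measurable_const_mul _) measurableSet_Iic]
  have h2 : (Real.sqrt v * ·) ⁻¹' Iic (Real.sqrt v * z) = Iic z := by
    ext x
    simp only [mem_preimage, mem_Iic]
    exact mul_le_mul_iff_right₀ hs
  rw [h2, gaussianReal_apply_eq_integral 0 one_ne_zero]
  congr 1
  rw [stdPhi, stdphi_eq]

end Aux

/-- For i.i.d. B₁,...,Bₙ ~ N(μ,σ²) with Sᵢ = B₁ + ⋯ + Bᵢ and linear penalty
P(Δ) = αΔ, 0 < α < min{ω,1-ω}, the optimal window for client i is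
(iμ + σ√i Φ⁻¹(α/(1-ω)), iμ + σ√i Φ⁻¹(1-α/ω)), whose width is proportional to √i. -/
theorem stmt9 {Ωs : Type*} [MeasurableSpace Ωs] (Pr : Measure Ωs)
    [IsProbabilityMeasure Pr]
    (n : ℕ) (B : ℕ → Ωs → ℝ) (μ σ : ℝ) (hσ : 0 < σ)
    (hmeas : ∀ j, Measurable (B j))
    (hind : iIndepFun B Pr)
    (hB : ∀ j, Measure.map (B j) Pr = gaussianReal μ ⟨σ ^ 2, sq_nonneg σ⟩)
    (ω α : ℝ) (hω : ω ∈ Set.Ioo (0:ℝ) 1) (hα : 0 < α) (hα' : α < min ω (1 - ω)) :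
    ∀ i : ℕ, 1 ≤ i → i ≤ n →
      (let F : ℝ → ℝ := fun s => (Pr {a | (∑ j ∈ Finset.range i, B j a) ≤ s}).toReal
       let t := i * μ + σ * Real.sqrt i * stdPhiInv (α / (1 - ω))
       let u := i * μ + σ * Real.sqrt i * stdPhiInv (1 - α / ω)
       (1 - ω) * F t = α ∧ ω * (1 - F u) = α ∧
         u - t = σ * Real.sqrt i * (stdPhiInv (1 - α / ω) - stdPhiInv (α / (1 - ω)))) := by
  intro i hi1 hi2
  intro F t u
  have hω1 : 0 < 1 - ω := by linarith [hω.2]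
  have hαω : α < ω := lt_of_lt_of_le hα' (min_le_left _ _)
  have hα1ω : α < 1 - ω := lt_of_lt_of_le hα' (min_le_right _ _)
  have hp₁ : α / (1 - ω) ∈ Set.Ioo (0:ℝ) 1 :=
    ⟨div_pos hα hω1, (div_lt_one hω1).mpr hα1ω⟩
  have hp₂ : 1 - α / ω ∈ Set.Ioo (0:ℝ) 1 := by
    constructor
    · have : α / ω < 1 := (div_lt_one hω.1).mpr hαω
      linarith
    · have : 0 < α / ω := div_pos hα hω.1
      linarith
  set v : ℝ≥0 := ((i : ℝ≥0) * ⟨σ ^ 2, sq_nonneg σ⟩ : ℝ≥0) with hvdef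
  have hv0 : v ≠ 0 := by
    intro h
    rcases mul_eq_zero.mp h with h' | h'
    · exact Nat.cast_ne_zero.mpr (by omega : i ≠ 0) h'
    · have : (σ:ℝ)^2 = 0 := congrArg (fun x : ℝ≥0 => (x:ℝ)) h'
      exact hσ.ne' (by nlinarith)
  have hsqrt : Real.sqrt v = σ * Real.sqrt i := by
    have hc : ((v : ℝ≥0) : ℝ) = (i : ℝ) * σ ^ 2 := by
      rw [hvdef]; push_cast; change (i:ℝ) * σ^2 = _; ring
    rw [hc, show (i:ℝ) * σ^2 = σ^2 * i by ring, Real.sqrt_mul (sq_nonneg σ),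
      Real.sqrt_sq hσ.le]
  have hX : Measurable (fun a => ∑ j ∈ Finset.range i, B j a) :=
    Finset.measurable_sum _ (fun j _ => hmeas j)
  have hmap := map_sum_gauss Pr B μ σ hσ hmeas hind hB i hi1
  have hF : ∀ z : ℝ, F ((i:ℝ) * μ + σ * Real.sqrt i * z) = stdPhi z := by
    intro z
    have hset : {a | (∑ j ∈ Finset.range i, B j a) ≤ (i:ℝ) * μ + σ * Real.sqrt i * z}
        = (fun a => ∑ j ∈ Finset.range i, B j a) ⁻¹' Iic ((i:ℝ) * μ + σ * Real.sqrt i * z) := rfl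
    have : Pr {a | (∑ j ∈ Finset.range i, B j a) ≤ (i:ℝ) * μ + σ * Real.sqrt i * z}
        = gaussianReal ((i:ℝ) * μ) v (Iic ((i:ℝ) * μ + σ * Real.sqrt i * z)) := by
      rw [hset, ← Measure.map_apply hX measurableSet_Iic, hmap]
    show (Pr _).toReal = _
    rw [this, show (i:ℝ) * μ + σ * Real.sqrt i * z = (i:ℝ) * μ + Real.sqrt v * z by
        rw [hsqrt], gaussianReal_Iic _ _ hv0, ENNReal.toReal_ofReal (stdPhi_nonneg z)]
  have hFt : F t = α / (1 - ω) := by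
    rw [show t = (i:ℝ) * μ + σ * Real.sqrt i * stdPhiInv (α / (1 - ω)) from rfl,
      hF _, stdPhi_invFun_eq hp₁]
  have hFu : F u = 1 - α / ω := by
    rw [show u = (i:ℝ) * μ + σ * Real.sqrt i * stdPhiInv (1 - α / ω) from rfl,
      hF _, stdPhi_invFun_eq hp₂]
  refine ⟨?_, ?_, ?_⟩
  · rw [hFt]; field_simp
  · rw [hFu]
    have : (1 - (1 - α / ω)) = α / ω := by ring
    rw [this, mul_comm ω (α / ω), div_mul_cancel₀ α hω.1.ne']
  · show ((i:ℝ) * μ + σ * Real.sqrt i * stdPhiInv (1 - α / ω))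
      - ((i:ℝ) * μ + σ * Real.sqrt i * stdPhiInv (α / (1 - ω))) = _
    ring
end
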